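/- arXiv:1705.03510 — 2 statements merged into one kernel-verified Lean document; each statement's English description precedes it below -/
import Mathlib

section
/- For every integer p ≥ 1 and every p×p real symmetric matrix T, (2^{p/2}·π^{p(p+1)/4})^{−1}·∫_{S_p} exp(−i·tr(T·X))·f_GOE(X)^{1/2} dX = (2^{p(3p+1)/8}/π^{p(p+1)/8})·exp(−2·tr(T²)). Consequently, the G-transform of the Gaussian Orthogonal Ensemble density, which is the square of this Fourier integral, equals ψ_GOE(T) = (2^{p(3p+1)/4}/π^{p(p+1)/4})·exp(−4·tr(T²)). -/
open MeasureTheory Matrix Filter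

noncomputable section

/-- Index set for the upper triangle of a `p × p` matrix. -/
abbrev UTIdx (p : ℕ) := {ij : Fin p × Fin p // ij.1 ≤ ij.2}

/-- Coordinates of a symmetric matrix: one real number per upper-triangular entry.
Integration over the space `S_p` of real symmetric matrices means integration with
respect to Lebesgue measure on these `p(p+1)/2` coordinates. -/
abbrev SymCoords (p : ℕ) := UTIdx p → ℝ

/-- The symmetric matrix determined by its upper-triangular coordinates. -/
def symOfCoords {p : ℕ} (v : SymCoords p) : Matrix (Fin p) (Fin p) ℝ :=
  fun i j => if h : i ≤ j then v ⟨(i, j), h⟩ else v ⟨(j, i), le_of_not_ge h⟩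

lemma symOfCoords_symm {p : ℕ} (v : SymCoords p) (i j : Fin p) :
    symOfCoords v i j = symOfCoords v j i := by
  by_cases hij : i ≤ j <;> by_cases hji : j ≤ i
  · have h : i = j := le_antisymm hij hji
    subst h; rfl
  · simp only [symOfCoords, dif_pos hij, dif_neg hji]
  · simp only [symOfCoords, dif_neg hij, dif_pos hji]
  · exact absurd (le_total i j) (by simp [hij, hji])

lemma symOfCoords_isHermitian {p : ℕ} (v : SymCoords p) :
    (symOfCoords v).IsHermitian := by
  ext i j
  simpa [Matrix.conjTranspose_apply] using symOfCoords_symm v j i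

/-- The density on `S_p` of the Gaussian Orthogonal Ensemble `GOE(p)`. -/
def fGOE (p : ℕ) (X : Matrix (Fin p) (Fin p) ℝ) : ℝ :=
  (2 : ℝ) ^ (-(((p * (p + 3) : ℕ) : ℝ)) / 4) * Real.pi ^ (-(((p * (p + 1) : ℕ) : ℝ)) / 4) *
    Real.exp (-Matrix.trace (X ^ 2) / 4)

/- ### Auxiliary lemmas -/

lemma sum_sym {p : ℕ} (g : Fin p → Fin p → ℝ) (hg : ∀ i j, g i j = g j i) :
    ∑ i, ∑ j, g i j =
      ∑ k : UTIdx p, (if k.1.1 = k.1.2 then g k.1.1 k.1.2 else 2 * g k.1.1 k.1.2) := by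
  classical
  rw [← Finset.sum_product', Finset.univ_product_univ]
  rw [← Finset.sum_filter_add_sum_filter_not Finset.univ (fun ij : Fin p × Fin p => ij.1 ≤ ij.2)]
  have h2 : ∑ ij ∈ Finset.univ.filter (fun ij : Fin p × Fin p => ¬ ij.1 ≤ ij.2), g ij.1 ij.2
      = ∑ ij ∈ Finset.univ.filter (fun ij : Fin p × Fin p => ij.1 < ij.2), g ij.1 ij.2 := by
    apply Finset.sum_nbij' (i := fun ij => ij.swap) (j := fun ij => ij.swap) <;>
      simp_all [Finset.mem_filter, lt_iff_le_and_ne, Prod.ext_iff]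
  rw [h2]
  have hsub : (∑ k : UTIdx p, if k.1.1 = k.1.2 then g k.1.1 k.1.2 else 2 * g k.1.1 k.1.2)
      = ∑ ij ∈ Finset.univ.filter (fun ij : Fin p × Fin p => ij.1 ≤ ij.2),
          (if ij.1 = ij.2 then g ij.1 ij.2 else 2 * g ij.1 ij.2) := by
    exact (Finset.sum_subtype (Finset.univ.filter (fun ij : Fin p × Fin p => ij.1 ≤ ij.2))
      (fun x => by simp) (fun ij => if ij.1 = ij.2 then g ij.1 ij.2 else 2 * g ij.1 ij.2)).symm
  rw [hsub]
  rw [← Finset.sum_filter_add_sum_filter_not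
    (Finset.univ.filter (fun ij : Fin p × Fin p => ij.1 ≤ ij.2))
    (fun ij : Fin p × Fin p => ij.1 = ij.2) (fun ij => g ij.1 ij.2)]
  rw [← Finset.sum_filter_add_sum_filter_not
    (Finset.univ.filter (fun ij : Fin p × Fin p => ij.1 ≤ ij.2))
    (fun ij : Fin p × Fin p => ij.1 = ij.2)
    (fun ij => if ij.1 = ij.2 then g ij.1 ij.2 else 2 * g ij.1 ij.2)]
  have hflt : (Finset.univ.filter (fun ij : Fin p × Fin p => ij.1 ≤ ij.2)).filter
      (fun ij => ¬ ij.1 = ij.2) = Finset.univ.filter (fun ij : Fin p × Fin p => ij.1 < ij.2) := by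
    rw [Finset.filter_filter]
    apply Finset.filter_congr
    intro ij _
    simp [lt_iff_le_and_ne]
  have e1 : ∑ ij ∈ (Finset.univ.filter (fun ij : Fin p × Fin p => ij.1 ≤ ij.2)).filter
      (fun ij => ij.1 = ij.2), (if ij.1 = ij.2 then g ij.1 ij.2 else 2 * g ij.1 ij.2)
      = ∑ ij ∈ (Finset.univ.filter (fun ij : Fin p × Fin p => ij.1 ≤ ij.2)).filter
      (fun ij => ij.1 = ij.2), g ij.1 ij.2 := by
    apply Finset.sum_congr rfl
    intro ij hij
    rw [Finset.mem_filter] at hij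
    rw [if_pos hij.2]
  have e2 : ∑ ij ∈ (Finset.univ.filter (fun ij : Fin p × Fin p => ij.1 ≤ ij.2)).filter
      (fun ij => ¬ ij.1 = ij.2), (if ij.1 = ij.2 then g ij.1 ij.2 else 2 * g ij.1 ij.2)
      = ∑ ij ∈ (Finset.univ.filter (fun ij : Fin p × Fin p => ij.1 ≤ ij.2)).filter
      (fun ij => ¬ ij.1 = ij.2), 2 * g ij.1 ij.2 := by
    apply Finset.sum_congr rfl
    intro ij hij
    rw [Finset.mem_filter] at hij
    rw [if_neg hij.2]
  rw [e1, e2, hflt]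
  rw [← Finset.mul_sum]
  ring

lemma symOfCoords_apply {p : ℕ} (v : SymCoords p) (k : UTIdx p) :
    symOfCoords v k.1.1 k.1.2 = v k := by
  rw [symOfCoords, dif_pos k.2]

def coordsOf {p : ℕ} (T : Matrix (Fin p) (Fin p) ℝ) : SymCoords p := fun k => T k.1.1 k.1.2

lemma symOfCoords_coordsOf {p : ℕ} {T : Matrix (Fin p) (Fin p) ℝ} (hT : T.IsSymm) :
    symOfCoords (coordsOf T) = T := by
  ext i j
  by_cases h : i ≤ j
  · simp [symOfCoords, coordsOf, h]
  · simp only [symOfCoords, coordsOf, dif_neg h]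
    exact hT.apply i j

lemma trace_mul_symOfCoords {p : ℕ} {T : Matrix (Fin p) (Fin p) ℝ} (hT : T.IsSymm)
    (v : SymCoords p) :
    Matrix.trace (T * symOfCoords v) =
      ∑ k : UTIdx p, (if k.1.1 = k.1.2 then (1:ℝ) else 2) * (T k.1.1 k.1.2 * v k) := by
  have h : Matrix.trace (T * symOfCoords v) = ∑ i, ∑ j, T i j * symOfCoords v j i := by
    simp [Matrix.trace, Matrix.mul_apply, Matrix.diag]
  rw [h, sum_sym (fun i j => T i j * symOfCoords v j i) (fun i j => by
    show T i j * symOfCoords v j i = T j i * symOfCoords v i j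
    rw [hT.apply j i, symOfCoords_symm v j i])]
  refine Finset.sum_congr rfl fun k _ => ?_
  rw [symOfCoords_symm, symOfCoords_apply]
  split <;> ring

lemma trace_sq_symOfCoords {p : ℕ} (v : SymCoords p) :
    Matrix.trace (symOfCoords v ^ 2) =
      ∑ k : UTIdx p, (if k.1.1 = k.1.2 then (1:ℝ) else 2) * (v k) ^ 2 := by
  have hs : (symOfCoords v).IsSymm := by
    ext i j; exact symOfCoords_symm v j i
  rw [sq, trace_mul_symOfCoords hs v]
  refine Finset.sum_congr rfl fun k _ => ?_
  rw [symOfCoords_apply]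
  ring

lemma trace_sq_of_isSymm {p : ℕ} {T : Matrix (Fin p) (Fin p) ℝ} (hT : T.IsSymm) :
    Matrix.trace (T ^ 2) =
      ∑ k : UTIdx p, (if k.1.1 = k.1.2 then (1:ℝ) else 2) * (T k.1.1 k.1.2) ^ 2 := by
  conv_lhs => rw [sq, ← symOfCoords_coordsOf hT, ← sq]
  rw [trace_sq_symOfCoords]
  simp [coordsOf]

lemma card_diag (p : ℕ) :
    (Finset.univ.filter fun k : UTIdx p => k.1.1 = k.1.2).card = p := by
  have h : (Finset.univ.filter fun k : UTIdx p => k.1.1 = k.1.2).card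
      = (Finset.univ : Finset (Fin p)).card := by
    apply Finset.card_nbij' (i := fun k => k.1.1) (j := fun i => ⟨(i, i), le_refl i⟩)
    · intro a _; simp
    · intro a _; simp
    · intro k hk
      simp only [Finset.mem_coe, Finset.mem_filter] at hk
      ext <;> simp [hk.2.symm]
    · intro i _; rfl
  simpa using h

lemma two_mul_card_UTIdx (p : ℕ) : 2 * Fintype.card (UTIdx p) = p * (p + 1) := by
  classical
  have hcard : Fintype.card (UTIdx p)
      = (Finset.univ.filter fun ij : Fin p × Fin p => ij.1 ≤ ij.2).card :=
    Fintype.card_subtype _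
  have hsplit : (Finset.univ.filter fun ij : Fin p × Fin p => ij.1 ≤ ij.2).card
      + (Finset.univ.filter fun ij : Fin p × Fin p => ¬ ij.1 ≤ ij.2).card = p * p := by
    rw [Finset.card_filter_add_card_filter_not]
    simp
  have hneg : (Finset.univ.filter fun ij : Fin p × Fin p => ¬ ij.1 ≤ ij.2).card
      = (Finset.univ.filter fun ij : Fin p × Fin p => ij.1 < ij.2).card := by
    apply Finset.card_nbij' (i := fun ij => ij.swap) (j := fun ij => ij.swap) <;>
      simp_all [Set.MapsTo, Set.LeftInvOn, Set.RightInvOn, lt_iff_le_and_ne, Prod.ext_iff]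
  have hle : (Finset.univ.filter fun ij : Fin p × Fin p => ij.1 ≤ ij.2).card
      = (Finset.univ.filter fun ij : Fin p × Fin p => ij.1 < ij.2).card + p := by
    have h1 := Finset.card_filter_add_card_filter_not
      (s := Finset.univ.filter fun ij : Fin p × Fin p => ij.1 ≤ ij.2)
      (p := fun ij : Fin p × Fin p => ij.1 = ij.2)
    have h2 : (Finset.univ.filter fun ij : Fin p × Fin p => ij.1 ≤ ij.2).filter
        (fun ij => ¬ ij.1 = ij.2) = Finset.univ.filter fun ij : Fin p × Fin p => ij.1 < ij.2 := by
      rw [Finset.filter_filter]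
      apply Finset.filter_congr
      intro ij _
      simp [lt_iff_le_and_ne]
    have h3 : (Finset.univ.filter fun ij : Fin p × Fin p => ij.1 ≤ ij.2).filter
        (fun ij => ij.1 = ij.2) = Finset.univ.filter fun ij : Fin p × Fin p => ij.1 = ij.2 := by
      ext ij
      simp only [Finset.filter_filter, Finset.mem_filter, Finset.mem_univ, true_and]
      constructor
      · exact fun h => h.2
      · exact fun h => ⟨le_of_eq h, h⟩
    have h4 : (Finset.univ.filter fun ij : Fin p × Fin p => ij.1 = ij.2).card = p := by
      have h5 : (Finset.univ.filter fun ij : Fin p × Fin p => ij.1 = ij.2).card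
          = (Finset.univ : Finset (Fin p)).card :=
        Finset.card_nbij' (i := fun ij => ij.1) (j := fun i => (i, i))
          (by simp) (by simp) (by simp_all [Set.LeftInvOn, Prod.ext_iff]) (by simp [Set.RightInvOn, Set.LeftInvOn])
      simpa using h5
    rw [h2, h3] at h1
    omega
  have hring : p * (p + 1) = p * p + p := by ring
  omega

lemma card_offdiag (p : ℕ) :
    (Finset.univ.filter fun k : UTIdx p => ¬ k.1.1 = k.1.2).card = Fintype.card (UTIdx p) - p := by
  have hc := Finset.card_filter_add_card_filter_not
    (s := (Finset.univ : Finset (UTIdx p))) (p := fun k : UTIdx p => k.1.1 = k.1.2)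
  rw [card_diag, Finset.card_univ] at hc
  omega

lemma sqrt_fGOE (p : ℕ) (X : Matrix (Fin p) (Fin p) ℝ) :
    Real.sqrt (fGOE p X) =
      (2 : ℝ) ^ (-(((p * (p + 3) : ℕ) : ℝ)) / 8) * Real.pi ^ (-(((p * (p + 1) : ℕ) : ℝ)) / 8) *
        Real.exp (-Matrix.trace (X ^ 2) / 8) := by
  have hπ := Real.pi_pos
  rw [fGOE, Real.sqrt_eq_rpow,
    Real.mul_rpow (by positivity) (Real.exp_nonneg _),
    Real.mul_rpow (by positivity) (by positivity),
    ← Real.rpow_mul (by norm_num), ← Real.rpow_mul hπ.le,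
    Real.rpow_def_of_pos (Real.exp_pos _), Real.log_exp]
  ring_nf

lemma pow_of_rpow (x : ℝ) (hx : 0 ≤ x) (a : ℝ) (n : ℕ) : (x ^ a) ^ n = x ^ (a * n) := by
  rw [← Real.rpow_natCast (x ^ a) n, ← Real.rpow_mul hx]

lemma aux8 (e : ℝ) : (8*Real.pi) ^ e = (2:ℝ) ^ (3*e) * Real.pi ^ e := by
  rw [Real.mul_rpow (by norm_num) Real.pi_pos.le,
    show (8:ℝ) = (2:ℝ) ^ (3:ℝ) by
      rw [show (3:ℝ) = ((3:ℕ):ℝ) by norm_num, Real.rpow_natCast]; norm_num,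
    ← Real.rpow_mul (by norm_num)]

lemma aux4 (e : ℝ) : (4*Real.pi) ^ e = (2:ℝ) ^ (2*e) * Real.pi ^ e := by
  rw [Real.mul_rpow (by norm_num) Real.pi_pos.le,
    show (4:ℝ) = (2:ℝ) ^ (2:ℝ) by
      rw [show (2:ℝ) = ((2:ℕ):ℝ) by norm_num, Real.rpow_natCast]; norm_num,
    ← Real.rpow_mul (by norm_num)]

lemma const_final (p N : ℕ) (hN : 2 * N = p * (p + 1)) :
    ((2:ℝ) ^ ((p:ℝ)/2) * Real.pi ^ (((p*(p+1):ℕ):ℝ)/4))⁻¹ *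
      ((2:ℝ) ^ (-(((p*(p+3):ℕ):ℝ))/8) * Real.pi ^ (-(((p*(p+1):ℕ):ℝ))/8) *
        ((((8*Real.pi) ^ ((1:ℝ)/2)) ^ p) * (((4*Real.pi) ^ ((1:ℝ)/2)) ^ (N - p))))
    = (2:ℝ) ^ (((p*(3*p+1):ℕ):ℝ)/8) / Real.pi ^ (((p*(p+1):ℕ):ℝ)/8) := by
  have hπ := Real.pi_pos
  have hpN : p ≤ N := by
    rcases Nat.eq_zero_or_pos p with h | h
    · omega
    · have : p ≤ p * p := Nat.le_mul_of_pos_left p h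
      have : p * (p + 1) = p * p + p := by ring
      omega
  have hNR : ((N - p : ℕ) : ℝ) = (N:ℝ) - (p:ℝ) := by
    rw [Nat.cast_sub hpN]
  have hNc : 2 * (N:ℝ) = (p:ℝ) * (p:ℝ) + (p:ℝ) := by
    have : ((2 * N : ℕ) : ℝ) = ((p * (p+1) : ℕ) : ℝ) := by rw [hN]
    push_cast at this
    linarith [this]
  conv_rhs => rw [div_eq_mul_inv, ← Real.rpow_neg hπ.le]
  rw [pow_of_rpow _ (by positivity), pow_of_rpow _ (by positivity),
    aux8, aux4,
    mul_inv, ← Real.rpow_neg (by norm_num), ← Real.rpow_neg hπ.le]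
  rw [show ∀ a b c d e f g h : ℝ, ((2:ℝ)^a * Real.pi^b) * ((2:ℝ)^c * Real.pi^d *
      ((2:ℝ)^e * Real.pi^f * ((2:ℝ)^g * Real.pi^h)))
      = (2:ℝ)^(a+c+e+g) * Real.pi^(b+d+f+h) from fun a b c d e f g h => by
    rw [Real.rpow_add two_pos, Real.rpow_add two_pos, Real.rpow_add two_pos,
      Real.rpow_add hπ, Real.rpow_add hπ, Real.rpow_add hπ]; ring]
  have e2 : -((p:ℝ)/2) + -(((p*(p+3):ℕ):ℝ))/8 + 3*((1:ℝ)/2*(p:ℕ)) + 2*((1:ℝ)/2*((N-p:ℕ):ℝ))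
      = ((p*(3*p+1):ℕ):ℝ)/8 := by
    push_cast [hNR]
    push_cast at hNc
    field_simp
    nlinarith [hNc]
  have eπ : -(((p*(p+1):ℕ):ℝ)/4) + -(((p*(p+1):ℕ):ℝ))/8 + (1:ℝ)/2*(p:ℕ)
      + (1:ℝ)/2*((N-p:ℕ):ℝ) = -(((p*(p+1):ℕ):ℝ)/8) := by
    push_cast [hNR]
    push_cast at hNc
    field_simp
    nlinarith [hNc]
  rw [e2, eπ]

/- ### main theorem -/

/-- For every `p ≥ 1` and every real symmetric `p × p` matrix `T`, the
normalized Fourier integral of `f_GOE^{1/2}` equals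
`2^{p(3p+1)/8}/π^{p(p+1)/8} · exp(-2 tr T²)`; consequently the G-transform of the GOE
density, the square of this Fourier integral, equals
`ψ_GOE(T) = 2^{p(3p+1)/4}/π^{p(p+1)/4} · exp(-4 tr T²)`. -/
theorem goe_gtransform (p : ℕ) (hp : 1 ≤ p) (T : Matrix (Fin p) (Fin p) ℝ) (hT : T.IsSymm) :
    ((((2 : ℝ) ^ ((p : ℝ) / 2) * Real.pi ^ (((p * (p + 1) : ℕ) : ℝ) / 4) : ℝ) : ℂ))⁻¹ *
        ∫ v : SymCoords p,
          Complex.exp (-Complex.I * ((Matrix.trace (T * symOfCoords v) : ℝ) : ℂ)) *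
            ((Real.sqrt (fGOE p (symOfCoords v)) : ℝ) : ℂ)
      = (((2 : ℝ) ^ (((p * (3 * p + 1) : ℕ) : ℝ) / 8) /
            Real.pi ^ (((p * (p + 1) : ℕ) : ℝ) / 8) : ℝ) : ℂ) *
          Complex.exp (-2 * ((Matrix.trace (T ^ 2) : ℝ) : ℂ)) ∧
    ((((2 : ℝ) ^ ((p : ℝ) / 2) * Real.pi ^ (((p * (p + 1) : ℕ) : ℝ) / 4) : ℝ) : ℂ)⁻¹ *
        ∫ v : SymCoords p,
          Complex.exp (-Complex.I * ((Matrix.trace (T * symOfCoords v) : ℝ) : ℂ)) *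
            ((Real.sqrt (fGOE p (symOfCoords v)) : ℝ) : ℂ)) ^ 2
      = (((2 : ℝ) ^ (((p * (3 * p + 1) : ℕ) : ℝ) / 4) /
            Real.pi ^ (((p * (p + 1) : ℕ) : ℝ) / 4) : ℝ) : ℂ) *
          Complex.exp (-4 * ((Matrix.trace (T ^ 2) : ℝ) : ℂ)) := by
  classical
  have hπ := Real.pi_pos
  set b : UTIdx p → ℂ := fun k => if k.1.1 = k.1.2 then (1/8 : ℂ) else (1/4 : ℂ) with hbdef
  set c : UTIdx p → ℂ :=
    fun k => -Complex.I * ((if k.1.1 = k.1.2 then (1:ℂ) else 2) * ((T k.1.1 k.1.2 : ℝ) : ℂ))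
    with hcdef
  set C : ℝ := (2 : ℝ) ^ (-(((p * (p + 3) : ℕ) : ℝ)) / 8) *
      Real.pi ^ (-(((p * (p + 1) : ℕ) : ℝ)) / 8) with hCdef
  -- pointwise identity
  have hpt : ∀ v : SymCoords p,
      Complex.exp (-Complex.I * ((Matrix.trace (T * symOfCoords v) : ℝ) : ℂ)) *
        ((Real.sqrt (fGOE p (symOfCoords v)) : ℝ) : ℂ)
      = (C : ℂ) * Complex.exp (-∑ k, b k * (v k : ℂ)^2 + ∑ k, c k * (v k : ℂ)) := by
    intro v
    have hsq : ((Real.sqrt (fGOE p (symOfCoords v)) : ℝ) : ℂ)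
        = (C : ℂ) * Complex.exp (((-Matrix.trace ((symOfCoords v)^2) / 8 : ℝ) : ℂ)) := by
      rw [sqrt_fGOE, hCdef]
      push_cast [Complex.ofReal_exp]
      ring
    rw [hsq]
    rw [show Complex.exp (-Complex.I * ((Matrix.trace (T * symOfCoords v) : ℝ) : ℂ)) *
        ((C : ℂ) * Complex.exp (((-Matrix.trace ((symOfCoords v)^2) / 8 : ℝ) : ℂ)))
        = (C : ℂ) * (Complex.exp (((-Matrix.trace ((symOfCoords v)^2) / 8 : ℝ) : ℂ)) *
          Complex.exp (-Complex.I * ((Matrix.trace (T * symOfCoords v) : ℝ) : ℂ))) by ring]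
    rw [← Complex.exp_add]
    congr 1
    have h1 : -Complex.I * ((Matrix.trace (T * symOfCoords v) : ℝ) : ℂ)
        = ∑ k, c k * (v k : ℂ) := by
      rw [trace_mul_symOfCoords hT v, Complex.ofReal_sum, Finset.mul_sum]
      refine Finset.sum_congr rfl fun k _ => ?_
      simp only [hcdef]
      split <;> push_cast <;> ring
    have h2 : ((-Matrix.trace ((symOfCoords v)^2) / 8 : ℝ) : ℂ)
        = -∑ k, b k * (v k : ℂ)^2 := by
      rw [trace_sq_symOfCoords v, Complex.ofReal_div, Complex.ofReal_neg, Complex.ofReal_sum,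
        neg_div, neg_inj, Finset.sum_div]
      refine Finset.sum_congr rfl fun k _ => ?_
      simp only [hbdef]
      split <;> push_cast <;> ring
    rw [h1, h2]
  have hbpos : ∀ k : UTIdx p, 0 < (b k).re := by
    intro k; simp only [hbdef]; split <;> norm_num
  have hint : (∫ v : SymCoords p,
      Complex.exp (-Complex.I * ((Matrix.trace (T * symOfCoords v) : ℝ) : ℂ)) *
        ((Real.sqrt (fGOE p (symOfCoords v)) : ℝ) : ℂ))
      = (C : ℂ) * ∏ k : UTIdx p,
          (↑Real.pi / b k) ^ (1/2 : ℂ) * Complex.exp (c k ^ 2 / (4 * b k)) := by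
    simp only [hpt]
    rw [MeasureTheory.integral_const_mul]
    rw [GaussianFourier.integral_cexp_neg_sum_mul_add hbpos c]
  set N : ℕ := Fintype.card (UTIdx p) with hNdef
  have hN : 2 * N = p * (p + 1) := two_mul_card_UTIdx p
  have hprodc : ∀ k : UTIdx p, (↑Real.pi / b k) ^ (1/2 : ℂ)
      = ((((if k.1.1 = k.1.2 then 8*Real.pi else 4*Real.pi) ^ ((1:ℝ)/2) : ℝ)) : ℂ) := by
    intro k
    simp only [hbdef]
    split
    · rw [show ((Real.pi : ℂ) / (1/8 : ℂ)) = (((8*Real.pi : ℝ)) : ℂ) by push_cast; ring,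
        show (1/2 : ℂ) = (((1:ℝ)/2 : ℝ) : ℂ) by norm_num,
        ← Complex.ofReal_cpow (by positivity)]
    · rw [show ((Real.pi : ℂ) / (1/4 : ℂ)) = (((4*Real.pi : ℝ)) : ℂ) by push_cast; ring,
        show (1/2 : ℂ) = (((1:ℝ)/2 : ℝ) : ℂ) by norm_num,
        ← Complex.ofReal_cpow (by positivity)]
  have hKprod : (∏ k : UTIdx p, (↑Real.pi / b k) ^ (1/2 : ℂ))
      = (((((8*Real.pi) ^ ((1:ℝ)/2)) ^ p * (((4*Real.pi) ^ ((1:ℝ)/2)) ^ (N - p)) : ℝ)) : ℂ) := by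
    rw [Finset.prod_congr rfl (fun k _ => hprodc k), ← Complex.ofReal_prod]
    norm_cast
    rw [show (fun k : UTIdx p => (if k.1.1 = k.1.2 then 8*Real.pi else 4*Real.pi) ^ ((1:ℝ)/2))
        = fun k : UTIdx p => if k.1.1 = k.1.2 then (8*Real.pi) ^ ((1:ℝ)/2)
          else (4*Real.pi) ^ ((1:ℝ)/2) from funext fun k => by split <;> rfl]
    rw [Finset.prod_ite, Finset.prod_const, Finset.prod_const, card_diag]
    rw [card_offdiag]
  have hexp : ∀ k : UTIdx p, c k ^ 2 / (4 * b k)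
      = -2 * (((if k.1.1 = k.1.2 then (1:ℝ) else 2) * (T k.1.1 k.1.2)^2 : ℝ) : ℂ) := by
    intro k
    simp only [hbdef, hcdef]
    split
    · push_cast
      field_simp
      ring_nf
      rw [Complex.I_sq]
      ring
    · push_cast
      field_simp
      ring_nf
      rw [Complex.I_sq]
      ring
  have hsum : (∑ k : UTIdx p, c k ^ 2 / (4 * b k)) = -2 * ((Matrix.trace (T^2) : ℝ) : ℂ) := by
    rw [Finset.sum_congr rfl (fun k _ => hexp k), ← Finset.mul_sum, ← Complex.ofReal_sum,
      ← trace_sq_of_isSymm hT]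
  have hmain : ((((2 : ℝ) ^ ((p : ℝ) / 2) * Real.pi ^ (((p * (p + 1) : ℕ) : ℝ) / 4) : ℝ) : ℂ))⁻¹ *
        (∫ v : SymCoords p,
          Complex.exp (-Complex.I * ((Matrix.trace (T * symOfCoords v) : ℝ) : ℂ)) *
            ((Real.sqrt (fGOE p (symOfCoords v)) : ℝ) : ℂ))
      = (((2 : ℝ) ^ (((p * (3 * p + 1) : ℕ) : ℝ) / 8) /
            Real.pi ^ (((p * (p + 1) : ℕ) : ℝ) / 8) : ℝ) : ℂ) *
          Complex.exp (-2 * ((Matrix.trace (T ^ 2) : ℝ) : ℂ)) := by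
    rw [hint, Finset.prod_mul_distrib, hKprod, ← Complex.exp_sum, hsum]
    rw [show ∀ A K : ℝ, ∀ Z : ℂ, ((A:ℂ))⁻¹ * ((C:ℂ) * (((K:ℝ):ℂ) * Complex.exp Z))
        = (((A⁻¹ * (C * K) : ℝ)):ℂ) * Complex.exp Z from fun A K Z => by push_cast; ring]
    congr 2
    rw [hCdef]
    rw [show ((2:ℝ) ^ ((p:ℝ)/2) * Real.pi ^ (((p*(p+1):ℕ):ℝ)/4))⁻¹ *
        ((2:ℝ) ^ (-(((p*(p+3):ℕ):ℝ))/8) * Real.pi ^ (-(((p*(p+1):ℕ):ℝ))/8) *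
        ((((8*Real.pi) ^ ((1:ℝ)/2)) ^ p) * (((4*Real.pi) ^ ((1:ℝ)/2)) ^ (N - p))))
        = (2:ℝ) ^ (((p*(3*p+1):ℕ):ℝ)/8) / Real.pi ^ (((p*(p+1):ℕ):ℝ)/8)
        from const_final p N hN]
  refine ⟨hmain, ?_⟩
  rw [hmain, mul_pow, sq (Complex.exp _), ← Complex.exp_add]
  rw [show (-2 * ((Matrix.trace (T ^ 2) : ℝ) : ℂ)) + (-2 * ((Matrix.trace (T ^ 2) : ℝ) : ℂ))
      = -4 * ((Matrix.trace (T ^ 2) : ℝ) : ℂ) by ring]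
  congr 1
  norm_cast
  rw [div_pow, pow_of_rpow _ (by norm_num), pow_of_rpow _ hπ.le]
  rw [show (((p*(3*p+1):ℕ):ℝ)/8) * ((2:ℕ):ℝ) = ((p*(3*p+1):ℕ):ℝ)/4 by push_cast; ring,
    show (((p*(p+1):ℕ):ℝ)/8) * ((2:ℕ):ℝ) = ((p*(p+1):ℕ):ℝ)/4 by push_cast; ring]
end
end

section
/- Let (Ω, μ) be a measure space and let s₁, s₂ : Ω → ℂ be measurable functions such that: ∫ |s₁|² dμ = 1; ∫ |s₂|² dμ < ∞; s₁(x) ≠ 0 and s₂(x) ≠ 0 for μ-almost every x; and the functions x ↦ log(|s₁(x)|/|s₂(x)|)·|s₁(x)|² and x ↦ |arg(s₂(x)/s₁(x))|·|s₁(x)|² are μ-integrable. Then ∫ |s₁ − s₂|² dμ ≤ (∫ |s₂|² dμ − 1) + 2·∫ log(|s₁|/|s₂|)·|s₁|² dμ + 2·(∫ |s₂|² dμ)^{1/2}·( 2·∫ |arg(s₂/s₁)|·|s₁|² dμ )^{1/2}, where arg denotes the principal argument in (−π, π]. -/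
open MeasureTheory

private lemma re_conj_mul_ofReal (w : ℂ) (r : ℝ) : ((starRingEnd ℂ) w * (r : ℂ)).re = w.re * r := by
  simp [Complex.mul_re]

private lemma one_sub_cos_le_abs (t : ℝ) : 1 - Real.cos t ≤ |t| := by
  rcases le_or_gt (|t|) 2 with h | h
  · have h1 : 1 - t ^ 2 / 2 ≤ Real.cos t := Real.one_sub_sq_div_two_le_cos
    have h2 : t ^ 2 = |t| ^ 2 := (sq_abs t).symm
    nlinarith [abs_nonneg t]
  · nlinarith [Real.neg_one_le_cos t]

/-- (Kullback–Leibler inequality for G-transforms.)  Let `(Ω, μ)` be a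
measure space and `s₁ s₂ : Ω → ℂ` measurable, with `∫ |s₁|² dμ = 1`, `|s₂|²` integrable,
`s₁ ≠ 0` and `s₂ ≠ 0` almost everywhere, and with
`log(|s₁|/|s₂|)·|s₁|²` and `|arg(s₂/s₁)|·|s₁|²` integrable.  Then
`∫ |s₁ - s₂|² dμ ≤ (∫ |s₂|² dμ - 1) + 2 ∫ log(|s₁|/|s₂|) |s₁|² dμ
  + 2 (∫ |s₂|² dμ)^{1/2} (2 ∫ |arg(s₂/s₁)| |s₁|² dμ)^{1/2}`. -/
theorem gtransform_kl_inequality {Ω : Type*} [MeasurableSpace Ω] (μ : Measure Ω)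
    (s₁ s₂ : Ω → ℂ) (hm₁ : Measurable s₁) (hm₂ : Measurable s₂)
    (h₁ : ∫ x, ‖s₁ x‖ ^ 2 ∂μ = 1)
    (h₂ : Integrable (fun x => ‖s₂ x‖ ^ 2) μ)
    (hne₁ : ∀ᵐ x ∂μ, s₁ x ≠ 0)
    (hne₂ : ∀ᵐ x ∂μ, s₂ x ≠ 0)
    (hlog : Integrable (fun x => Real.log (‖s₁ x‖ / ‖s₂ x‖) * ‖s₁ x‖ ^ 2) μ)
    (harg : Integrable (fun x => |Complex.arg (s₂ x / s₁ x)| * ‖s₁ x‖ ^ 2) μ) :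
    ∫ x, ‖s₁ x - s₂ x‖ ^ 2 ∂μ ≤
      ((∫ x, ‖s₂ x‖ ^ 2 ∂μ) - 1)
        + 2 * ∫ x, Real.log (‖s₁ x‖ / ‖s₂ x‖) * ‖s₁ x‖ ^ 2 ∂μ
        + 2 * Real.sqrt (∫ x, ‖s₂ x‖ ^ 2 ∂μ) *
            Real.sqrt (2 * ∫ x, |Complex.arg (s₂ x / s₁ x)| * ‖s₁ x‖ ^ 2 ∂μ) := by
  -- notation
  set θ : Ω → ℝ := fun x => Complex.arg (s₂ x / s₁ x) with hθ
  -- integrability of ‖s₁‖²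
  have ha2 : Integrable (fun x => ‖s₁ x‖ ^ 2) μ := by
    by_contra h
    rw [integral_undef h] at h₁
    norm_num at h₁
  have hmeas_a : Measurable fun x => ‖s₁ x‖ := hm₁.norm
  have hmeas_b : Measurable fun x => ‖s₂ x‖ := hm₂.norm
  have hmeas_θ : Measurable θ := Complex.measurable_arg.comp (hm₂.div hm₁)
  -- integrability of the product of norms
  have hab : Integrable (fun x => ‖s₁ x‖ * ‖s₂ x‖) μ := by
    have hsum : Integrable (fun x => (‖s₁ x‖ ^ 2 + ‖s₂ x‖ ^ 2) / 2) μ := (ha2.add h₂).div_const 2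
    refine hsum.mono' (hmeas_a.mul hmeas_b).aestronglyMeasurable ?_
    refine Filter.Eventually.of_forall fun x => ?_
    rw [Real.norm_of_nonneg (by positivity)]
    nlinarith [sq_nonneg (‖s₁ x‖ - ‖s₂ x‖)]
  -- integrability of the real part
  have hre_meas : Measurable (fun x => (s₁ x * (starRingEnd ℂ) (s₂ x)).re) := by
    have : (fun x => (s₁ x * (starRingEnd ℂ) (s₂ x)).re)
        = fun x => (s₁ x).re * (s₂ x).re + (s₁ x).im * (s₂ x).im := by
      funext x
      simp [Complex.mul_re]
    rw [this]
    exact ((Complex.measurable_re.comp hm₁).mul (Complex.measurable_re.comp hm₂)).add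
      ((Complex.measurable_im.comp hm₁).mul (Complex.measurable_im.comp hm₂))
  have hre : Integrable (fun x => (s₁ x * (starRingEnd ℂ) (s₂ x)).re) μ := by
    refine hab.mono' hre_meas.aestronglyMeasurable ?_
    refine Filter.Eventually.of_forall fun x => ?_
    calc ‖(s₁ x * (starRingEnd ℂ) (s₂ x)).re‖ ≤ ‖s₁ x * (starRingEnd ℂ) (s₂ x)‖ :=
          Complex.abs_re_le_norm _
      _ = ‖s₁ x‖ * ‖s₂ x‖ := by
          rw [norm_mul, Complex.norm_conj]
  -- algebraic identity of the real part a.e.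
  have hre_eq : ∀ᵐ x ∂μ, (s₁ x * (starRingEnd ℂ) (s₂ x)).re
      = ‖s₁ x‖ * ‖s₂ x‖ * Real.cos (θ x) := by
    filter_upwards [hne₁, hne₂] with x h1 h2
    have ha0 : ‖s₁ x‖ ≠ 0 := norm_ne_zero_iff.mpr h1
    have hc1 : (starRingEnd ℂ) (s₁ x) ≠ 0 := by simpa using h1
    have key : s₁ x * (starRingEnd ℂ) (s₂ x)
        = (starRingEnd ℂ) (s₂ x / s₁ x) * (((‖s₁ x‖ ^ 2 : ℝ)) : ℂ) := by
      have hsq : (((‖s₁ x‖ ^ 2 : ℝ)) : ℂ) = s₁ x * (starRingEnd ℂ) (s₁ x) := by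
        rw [Complex.mul_conj]
        norm_cast
        rw [Complex.normSq_eq_norm_sq]
      rw [hsq, map_div₀, div_mul_eq_mul_div, eq_div_iff hc1]
      ring
    have hre2 : (s₁ x * (starRingEnd ℂ) (s₂ x)).re = (s₂ x / s₁ x).re * ‖s₁ x‖ ^ 2 := by
      rw [key]
      exact re_conj_mul_ofReal _ _
    have hre_z : (s₂ x / s₁ x).re = ‖s₂ x‖ / ‖s₁ x‖ * Real.cos (θ x) := by
      rw [← Complex.norm_mul_cos_arg (s₂ x / s₁ x), norm_div]
    rw [hre2, hre_z, div_mul_eq_mul_div, div_mul_eq_mul_div, div_eq_iff ha0]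
    ring
  -- expansion of the squared norm
  have hexp : ∀ x, ‖s₁ x - s₂ x‖ ^ 2
      = ‖s₁ x‖ ^ 2 + ‖s₂ x‖ ^ 2 - 2 * (s₁ x * (starRingEnd ℂ) (s₂ x)).re := by
    intro x
    simp only [Complex.sq_norm, Complex.normSq_apply, Complex.sub_re,
      Complex.sub_im, Complex.mul_re, Complex.conj_re, Complex.conj_im]
    ring
  -- the auxiliary function g
  set g : Ω → ℝ := fun x => ‖s₂ x‖ * (‖s₁ x‖ * (1 - Real.cos (θ x))) with hg
  have hg_meas : Measurable g :=
    hmeas_b.mul (hmeas_a.mul (measurable_const.sub (Real.measurable_cos.comp hmeas_θ)))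
  have hg_int : Integrable g μ := by
    refine (hab.sub hre).congr ?_
    filter_upwards [hre_eq] with x hx
    rw [hg]
    simp only [Pi.sub_apply, hx]
    ring
  -- Step 1: 1 - ∫ re ≤ L + ∫ g
  have key1 : 1 - (∫ x, (s₁ x * (starRingEnd ℂ) (s₂ x)).re ∂μ)
      ≤ (∫ x, Real.log (‖s₁ x‖ / ‖s₂ x‖) * ‖s₁ x‖ ^ 2 ∂μ) + ∫ x, g x ∂μ := by
    have hF : Integrable (fun x => ‖s₁ x‖ ^ 2 - (s₁ x * (starRingEnd ℂ) (s₂ x)).re) μ :=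
      ha2.sub hre
    have hGint : Integrable (fun x => Real.log (‖s₁ x‖ / ‖s₂ x‖) * ‖s₁ x‖ ^ 2 + g x) μ :=
      hlog.add hg_int
    have hmono : (fun x => ‖s₁ x‖ ^ 2 - (s₁ x * (starRingEnd ℂ) (s₂ x)).re)
        ≤ᵐ[μ] fun x => Real.log (‖s₁ x‖ / ‖s₂ x‖) * ‖s₁ x‖ ^ 2 + g x := by
      filter_upwards [hne₁, hne₂, hre_eq] with x h1 h2 hx
      have ha0 : (0:ℝ) < ‖s₁ x‖ := norm_pos_iff.mpr h1
      have hb0 : (0:ℝ) < ‖s₂ x‖ := norm_pos_iff.mpr h2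
      set a := ‖s₁ x‖
      set b := ‖s₂ x‖
      have hlog1 : Real.log (b / a) ≤ b / a - 1 :=
        Real.log_le_sub_one_of_pos (div_pos hb0 ha0)
      have hlog2 : Real.log (a / b) = - Real.log (b / a) := by
        rw [← Real.log_inv, inv_div]
      have h3 : 1 - b / a ≤ Real.log (a / b) := by rw [hlog2]; linarith
      have h4 : (1 - b / a) * a ^ 2 ≤ Real.log (a / b) * a ^ 2 :=
        mul_le_mul_of_nonneg_right h3 (sq_nonneg a)
      have h5 : (1 - b / a) * a ^ 2 = a ^ 2 - a * b := by
        field_simp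
      rw [hx, hg]
      simp only
      nlinarith [h4, h5]
    have := integral_mono_ae hF hGint hmono
    rw [integral_sub ha2 hre, integral_add hlog hg_int, h₁] at this
    linarith
  -- Step 2: Cauchy–Schwarz bound on ∫ g
  have key2 : (∫ x, g x ∂μ)
      ≤ Real.sqrt (∫ x, ‖s₂ x‖ ^ 2 ∂μ) * Real.sqrt (2 * ∫ x, |θ x| * ‖s₁ x‖ ^ 2 ∂μ) := by
    set G : Ω → ℝ := fun x => ‖s₁ x‖ * (1 - Real.cos (θ x)) with hG
    have hG_meas : Measurable G :=
      hmeas_a.mul (measurable_const.sub (Real.measurable_cos.comp hmeas_θ))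
    have hG_nonneg : ∀ x, 0 ≤ G x := fun x =>
      mul_nonneg (norm_nonneg _) (by nlinarith [Real.cos_le_one (θ x)])
    have hG2_int : Integrable (fun x => G x ^ 2) μ := by
      have h4a : Integrable (fun x => 4 * ‖s₁ x‖ ^ 2) μ := ha2.const_mul 4
      refine h4a.mono' (hG_meas.pow_const 2).aestronglyMeasurable ?_
      refine Filter.Eventually.of_forall fun x => ?_
      rw [Real.norm_of_nonneg (sq_nonneg _)]
      have h1 := Real.cos_le_one (θ x)
      have h2 := Real.neg_one_le_cos (θ x)
      rw [hG]
      simp only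
      nlinarith [mul_nonneg (mul_nonneg (sq_nonneg (‖s₁ x‖))
        (by linarith : (0:ℝ) ≤ 1 + Real.cos (θ x))) (by linarith : (0:ℝ) ≤ 3 - Real.cos (θ x))]
    have hpq : Real.HolderConjugate 2 2 := ⟨by norm_num, by norm_num, by norm_num⟩
    have h2e : (ENNReal.ofReal (2:ℝ)) = 2 := by
      rw [ENNReal.ofReal_ofNat]
    have hmem_b : MemLp (fun x => ‖s₂ x‖) (ENNReal.ofReal (2:ℝ)) μ := by
      rw [h2e]
      exact (memLp_two_iff_integrable_sq hmeas_b.aestronglyMeasurable).mpr h₂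
    have hmem_G : MemLp G (ENNReal.ofReal (2:ℝ)) μ := by
      rw [h2e]
      exact (memLp_two_iff_integrable_sq hG_meas.aestronglyMeasurable).mpr hG2_int
    have hCS := integral_mul_le_Lp_mul_Lq_of_nonneg hpq
      (Filter.Eventually.of_forall fun x => norm_nonneg (s₂ x))
      (Filter.Eventually.of_forall hG_nonneg) hmem_b hmem_G
    have hrpow : ∀ y : ℝ, y ^ (2:ℝ) = y ^ (2:ℕ) := fun y => by
      rw [show (2:ℝ) = ((2:ℕ):ℝ) by norm_num, Real.rpow_natCast]
    simp only [hrpow] at hCS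
    -- ∫ G² ≤ 2 T
    have hG2_le : (∫ x, G x ^ 2 ∂μ) ≤ 2 * ∫ x, |θ x| * ‖s₁ x‖ ^ 2 ∂μ := by
      have h2T : Integrable (fun x => 2 * (|θ x| * ‖s₁ x‖ ^ 2)) μ := harg.const_mul 2
      rw [show (2 : ℝ) * ∫ x, |θ x| * ‖s₁ x‖ ^ 2 ∂μ
          = ∫ x, 2 * (|θ x| * ‖s₁ x‖ ^ 2) ∂μ from (integral_const_mul 2 _).symm]
      refine integral_mono_ae hG2_int h2T ?_
      refine Filter.Eventually.of_forall fun x => ?_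
      have h1 := one_sub_cos_le_abs (θ x)
      have h2 := Real.cos_le_one (θ x)
      have h3 := Real.neg_one_le_cos (θ x)
      have huu : (1 - Real.cos (θ x)) ^ 2 ≤ 2 * |θ x| := by
        nlinarith [mul_nonneg (by linarith : (0:ℝ) ≤ 1 - Real.cos (θ x))
          (by linarith : (0:ℝ) ≤ 1 + Real.cos (θ x))]
      rw [hG]
      simp only
      nlinarith [mul_le_mul_of_nonneg_left huu (sq_nonneg (‖s₁ x‖))]
    calc (∫ x, g x ∂μ) ≤ (∫ x, ‖s₂ x‖ ^ 2 ∂μ) ^ ((1:ℝ)/2) * (∫ x, G x ^ 2 ∂μ) ^ ((1:ℝ)/2) := by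
          exact_mod_cast hCS
      _ = Real.sqrt (∫ x, ‖s₂ x‖ ^ 2 ∂μ) * Real.sqrt (∫ x, G x ^ 2 ∂μ) := by
          rw [Real.sqrt_eq_rpow, Real.sqrt_eq_rpow]
      _ ≤ Real.sqrt (∫ x, ‖s₂ x‖ ^ 2 ∂μ) * Real.sqrt (2 * ∫ x, |θ x| * ‖s₁ x‖ ^ 2 ∂μ) :=
          mul_le_mul_of_nonneg_left (Real.sqrt_le_sqrt hG2_le) (Real.sqrt_nonneg _)
  -- expansion of the integral of the squared difference
  have hIsub : (∫ x, ‖s₁ x - s₂ x‖ ^ 2 ∂μ)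
      = 1 + (∫ x, ‖s₂ x‖ ^ 2 ∂μ) - 2 * ∫ x, (s₁ x * (starRingEnd ℂ) (s₂ x)).re ∂μ := by
    have hI1 : Integrable (fun x => ‖s₁ x‖ ^ 2 + ‖s₂ x‖ ^ 2) μ := ha2.add h₂
    have hI2 : Integrable (fun x => 2 * (s₁ x * (starRingEnd ℂ) (s₂ x)).re) μ := hre.const_mul 2
    rw [integral_congr_ae (Filter.Eventually.of_forall hexp), integral_sub hI1 hI2,
      integral_add ha2 h₂, integral_const_mul, h₁]
  rw [hIsub]
  linarith
end
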